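/- Fix an integer n ≥ 1 and a real constant Λ, and define F : ℝ³ → ℝ³ by F(x, y, z) = ((1/2)x(y² + z² − x²), (1/2)y(z² + x² − y²), (1/2)n·z(x² + y² − z² − (2Λ/n)x²y²)). Then F(x, y, z) = 0 if and only if (x, y, z) is of one of the forms (0, K, K), (0, K, −K), (K, 0, K), (K, 0, −K), (K, K, 0), (K, −K, 0) for some K ∈ ℝ. -/

import Mathlib

/-!
If `x` and `y` are both nonzero, the first two equations give `y² + z² = x²` and
`z² + x² = y²`, whence `z = 0` and `x² = y²`. Otherwise `xy = 0`, so the `Λ`-term of the third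
equation vanishes, and each remaining case puts the point on one of the cones
`x = 0, y² = z²`, `y = 0, x² = z²`, `z = 0, x² = y²`.
-/

theorem reducedKE_factors_eq_zero_iff {R : Type*} [Field R] [CharZero R] (c x y z : R) :
    (x * (y ^ 2 + z ^ 2 - x ^ 2) = 0 ∧ y * (z ^ 2 + x ^ 2 - y ^ 2) = 0 ∧
        z * (x ^ 2 + y ^ 2 - z ^ 2 - c * x ^ 2 * y ^ 2) = 0) ↔
      (x = 0 ∧ y ^ 2 = z ^ 2) ∨ (y = 0 ∧ x ^ 2 = z ^ 2) ∨ (z = 0 ∧ x ^ 2 = y ^ 2) := by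
  constructor
  · rintro ⟨hx, hy, hz⟩
    rcases mul_eq_zero.mp hx with rfl | hx
    · refine Or.inl ⟨rfl, ?_⟩
      rcases mul_eq_zero.mp hy with rfl | hy
      · have hz3 : z ^ 3 = 0 := by linear_combination -hz
        simp [pow_eq_zero_iff (n := 3) three_ne_zero |>.mp hz3]
      · linear_combination -hy
    · rcases mul_eq_zero.mp hy with rfl | hy
      · exact Or.inr (Or.inl ⟨rfl, by linear_combination -hx⟩)
      · have hz0 : z = 0 := by
          have h2z : (2 : R) * z ^ 2 = 0 := by linear_combination hx + hy
          simpa using h2z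
        subst hz0
        exact Or.inr (Or.inr ⟨rfl, by linear_combination -hx⟩)
  · rintro (⟨rfl, h⟩ | ⟨rfl, h⟩ | ⟨rfl, h⟩) <;> refine ⟨?_, ?_, ?_⟩ <;> grind

theorem exists_reducedKE_critical_form_iff {R : Type*} [CommRing R] [NoZeroDivisors R]
    (x y z : R) :
    (∃ K : R,
      (x, y, z) = (0, K, K) ∨ (x, y, z) = (0, K, -K) ∨
      (x, y, z) = (K, 0, K) ∨ (x, y, z) = (K, 0, -K) ∨
      (x, y, z) = (K, K, 0) ∨ (x, y, z) = (K, -K, 0)) ↔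
      (x = 0 ∧ y ^ 2 = z ^ 2) ∨ (y = 0 ∧ x ^ 2 = z ^ 2) ∨ (z = 0 ∧ x ^ 2 = y ^ 2) := by
  constructor
  · rintro ⟨K, h | h | h | h | h | h⟩ <;> obtain ⟨rfl, rfl, rfl⟩ := Prod.mk.injEq .. ▸ h <;> simp
  · rintro (⟨rfl, h⟩ | ⟨rfl, h⟩ | ⟨rfl, h⟩) <;>
      [refine ⟨y, ?_⟩; refine ⟨x, ?_⟩; refine ⟨x, ?_⟩] <;>
      rcases sq_eq_sq_iff_eq_or_eq_neg.mp h.symm with rfl | rfl <;> simp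

theorem critical_points_of_reduced_KE_system
    (n : ℕ) (hn : 1 ≤ n) (Λ : ℝ)
    (F : ℝ × ℝ × ℝ → ℝ × ℝ × ℝ)
    (hF : ∀ x y z : ℝ, F (x, y, z) =
      ((1/2) * x * (y ^ 2 + z ^ 2 - x ^ 2),
       (1/2) * y * (z ^ 2 + x ^ 2 - y ^ 2),
       (1/2) * (n : ℝ) * z * (x ^ 2 + y ^ 2 - z ^ 2 - (2 * Λ / (n : ℝ)) * x ^ 2 * y ^ 2))) :
    ∀ x y z : ℝ, F (x, y, z) = 0 ↔ ∃ K : ℝ,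
      (x, y, z) = (0, K, K) ∨ (x, y, z) = (0, K, -K) ∨
      (x, y, z) = (K, 0, K) ∨ (x, y, z) = (K, 0, -K) ∨
      (x, y, z) = (K, K, 0) ∨ (x, y, z) = (K, -K, 0) := by
  have hn0 : (n : ℝ) ≠ 0 := Nat.cast_ne_zero.mpr (by omega)
  intro x y z
  rw [hF, exists_reducedKE_critical_form_iff, ← reducedKE_factors_eq_zero_iff (2 * Λ / n)]
  simp only [Prod.mk_eq_zero, mul_assoc, mul_eq_zero_iff_left (one_div_ne_zero (two_ne_zero' ℝ)),
    mul_eq_zero_iff_left hn0]
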